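/- Let c and c' be two cycle points in the same finite minimal invariant set M (for the maps g_l(t) = R^{-1}(t−l), l ∈ L). Then Λ(c) = Λ(c'), where Λ(c) = { l₀ + R l₁ + ⋯ + R^k l_k + R^{k+1} c : l₀…l_k ∈ Ω(c) }. -/

import Mathlib

open Complex

/-- `m_B(x) = (1/N) ∑_{b ∈ B} e^{2πibx}`. -/
noncomputable def mBg (B : Finset ℤ) (x : ℝ) : ℂ :=
  (∑ b ∈ B, Complex.exp (2 * Real.pi * Complex.I * ((b : ℝ) * x))) / (B.card : ℂ)

/-- Apply the maps `g_l(t) = (t - l)/R` along a word, first digit first. -/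
noncomputable def run (R : ℤ) (c : ℝ) (w : List ℤ) : ℝ :=
  w.foldl (fun t l => (t - (l : ℝ)) / (R : ℝ)) c

/-- A cycle word for `c`: a nonempty word with digits in `L`, with all transitions
possible (`α_l m_B(g_l(t)) ≠ 0`), returning to `c` only at the last step. -/
noncomputable def CycleWord (R : ℤ) (B L : Finset ℤ) (α : ℤ → ℂ) (c : ℝ) (w : List ℤ) :
    Prop :=
  w ≠ [] ∧ (∀ l ∈ w, l ∈ L) ∧ run R c w = c ∧
  (∀ k : ℕ, k + 1 < w.length → run R c (w.take (k + 1)) ≠ c) ∧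
  (∀ k : ℕ, k < w.length → α (w.getD k 0) * mBg B (run R c (w.take (k + 1))) ≠ 0)

/-- `Ω(c)`: finite words with digits in `L` that do not end in a cycle word for `c`. -/
noncomputable def Omega (R : ℤ) (B L : Finset ℤ) (α : ℤ → ℂ) (c : ℝ) (w : List ℤ) :
    Prop :=
  (∀ l ∈ w, l ∈ L) ∧ ¬ ∃ u v : List ℤ, CycleWord R B L α c v ∧ w = u ++ v

/-- `Λ(c) = { l₀ + R l₁ + ⋯ + R^k l_k + R^{k+1} c : l₀…l_k ∈ Ω(c) }`. -/
noncomputable def Lam (R : ℤ) (B L : Finset ℤ) (α : ℤ → ℂ) (c : ℝ) : Set ℝ :=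
  {x | ∃ w : List ℤ, Omega R B L α c w ∧
    x = (∑ i ∈ Finset.range w.length, (R : ℝ) ^ i * (w.getD i 0 : ℝ)) +
        (R : ℝ) ^ w.length * c}

/-- Invariance of a set under the possible transitions. -/
noncomputable def InvSet (R : ℤ) (B L : Finset ℤ) (α : ℤ → ℂ) (M : Set ℝ) : Prop :=
  ∀ t ∈ M, ∀ l ∈ L, α l * mBg B ((t - (l : ℝ)) / (R : ℝ)) ≠ 0 →
    (t - (l : ℝ)) / (R : ℝ) ∈ M

/-- A min-set: nonempty, finite, invariant, and minimal with these properties. -/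
noncomputable def MinSet (R : ℤ) (B L : Finset ℤ) (α : ℤ → ℂ) (M : Set ℝ) : Prop :=
  M.Finite ∧ M.Nonempty ∧ InvSet R B L α M ∧
    ∀ M' ⊆ M, M'.Nonempty → InvSet R B L α M' → M' = M

/-!
The value `wordVal R w c = l₀ + R l₁ + ⋯ + R^k l_k + R^{k+1} c` of a word `w = l₀…l_k` inverts
`run R c w`. A word ending in a cycle word `v` for `c` has the same value as the word with `v`
removed, since `wordVal R v c = c`; stripping such suffixes shows that `Λ(c)` is the set of values
of *all* words over `L`. In a min-set every point `c'` is reached from `c` by some word `u`, so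
`c = wordVal R u c'` and `wordVal R w c = wordVal R (w ++ u) c'`, giving `Λ(c) ⊆ Λ(c')`.
-/

noncomputable def wordVal (R : ℤ) (w : List ℤ) (c : ℝ) : ℝ :=
  (∑ i ∈ Finset.range w.length, (R : ℝ) ^ i * (w.getD i 0 : ℝ)) + (R : ℝ) ^ w.length * c

def reachable (R : ℤ) (L : Finset ℤ) (c : ℝ) : Set ℝ :=
  {t | ∃ u : List ℤ, (∀ l ∈ u, l ∈ L) ∧ run R c u = t}

section

variable {R : ℤ} {B L : Finset ℤ} {α : ℤ → ℂ}

@[simp]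
lemma wordVal_nil (c : ℝ) : wordVal R [] c = c := by
  simp [wordVal]

lemma wordVal_cons (l : ℤ) (w : List ℤ) (c : ℝ) :
    wordVal R (l :: w) c = l + R * wordVal R w c := by
  simp only [wordVal, List.length_cons, Finset.sum_range_succ', List.getD_cons_succ,
    List.getD_cons_zero, pow_succ', mul_add, Finset.mul_sum, mul_assoc]
  ring

lemma wordVal_append (w u : List ℤ) (c : ℝ) :
    wordVal R (w ++ u) c = wordVal R w (wordVal R u c) := by
  induction w with
  | nil => simp
  | cons l w ih => rw [List.cons_append, wordVal_cons, wordVal_cons, ih]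

lemma run_append (c : ℝ) (u v : List ℤ) : run R c (u ++ v) = run R (run R c u) v := by
  simp [run, List.foldl_append]

lemma wordVal_run (hR : (R : ℝ) ≠ 0) (w : List ℤ) (c : ℝ) : wordVal R w (run R c w) = c := by
  induction w generalizing c with
  | nil => exact wordVal_nil c
  | cons l w ih =>
    change wordVal R (l :: w) (run R ((c - l) / R) w) = c
    rw [wordVal_cons, ih]
    field_simp
    ring

lemma CycleWord.wordVal_eq {c : ℝ} {v : List ℤ} (hR : (R : ℝ) ≠ 0)
    (hv : CycleWord R B L α c v) : wordVal R v c = c := by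
  simpa [hv.2.2.1] using wordVal_run hR v c

lemma exists_omega_wordVal_eq (hR : (R : ℝ) ≠ 0) (c : ℝ) (w : List ℤ) (hw : ∀ l ∈ w, l ∈ L) :
    ∃ w', Omega R B L α c w' ∧ wordVal R w' c = wordVal R w c := by
  by_cases hΩ : Omega R B L α c w
  · exact ⟨w, hΩ, rfl⟩
  obtain ⟨u, v, hv, rfl⟩ : ∃ u v, CycleWord R B L α c v ∧ w = u ++ v := by
    by_contra h
    exact hΩ ⟨hw, h⟩
  have : u.length < (u ++ v).length := by simp [List.length_pos_iff.mpr hv.1]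
  obtain ⟨w', hw', hval⟩ :=
    exists_omega_wordVal_eq hR c u fun l hl => hw l (List.mem_append_left v hl)
  exact ⟨w', hw', by rw [hval, wordVal_append, hv.wordVal_eq hR]⟩
termination_by w.length

lemma lam_eq_setOf_wordVal (hR : (R : ℝ) ≠ 0) (c : ℝ) :
    Lam R B L α c = {x | ∃ w : List ℤ, (∀ l ∈ w, l ∈ L) ∧ x = wordVal R w c} := by
  ext x
  constructor
  · rintro ⟨w, hw, rfl⟩
    exact ⟨w, hw.1, rfl⟩
  · rintro ⟨w, hw, rfl⟩
    obtain ⟨w', hw', hval⟩ := exists_omega_wordVal_eq hR c w hw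
    exact ⟨w', hw', hval.symm⟩

lemma lam_subset_of_mem_reachable (hR : (R : ℝ) ≠ 0) {c c' : ℝ} (h : c' ∈ reachable R L c) :
    Lam R B L α c ⊆ Lam R B L α c' := by
  obtain ⟨u, hu, rfl⟩ := h
  rw [lam_eq_setOf_wordVal hR, lam_eq_setOf_wordVal hR]
  rintro x ⟨w, hw, rfl⟩
  refine ⟨w ++ u, fun l hl => (List.mem_append.mp hl).elim (hw l) (hu l), ?_⟩
  rw [wordVal_append, wordVal_run hR]

lemma InvSet.inter_reachable {M : Set ℝ} (hM : InvSet R B L α M) (c : ℝ) :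
    InvSet R B L α (M ∩ reachable R L c) := by
  rintro t ⟨htM, u, hu, rfl⟩ l hl hα
  refine ⟨hM _ htM l hl hα, u ++ [l], ?_, by rw [run_append]; rfl⟩
  simpa [or_imp, forall_and] using ⟨hu, hl⟩

lemma MinSet.subset_reachable {M : Set ℝ} (hM : MinSet R B L α M) {c : ℝ} (hc : c ∈ M) :
    M ⊆ reachable R L c := by
  have hc_reach : c ∈ reachable R L c := ⟨[], by simp, rfl⟩
  rw [← hM.2.2.2 _ Set.inter_subset_left ⟨c, hc, hc_reach⟩ (hM.2.2.1.inter_reachable c)]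
  exact Set.inter_subset_right

end

theorem stmt13_general (R : ℤ) (hR : 2 ≤ R) (B L : Finset ℤ) (α : ℤ → ℂ)
    (M : Set ℝ) (hM : MinSet R B L α M) (c c' : ℝ)
    (hc : c ∈ M) (hc' : c' ∈ M) :
    Lam R B L α c = Lam R B L α c' := by
  have hR0 : (R : ℝ) ≠ 0 := by exact_mod_cast (by omega : R ≠ 0)
  exact (lam_subset_of_mem_reachable hR0 (hM.subset_reachable hc hc')).antisymm
    (lam_subset_of_mem_reachable hR0 (hM.subset_reachable hc' hc))

/-- for two cycle points `c, c'` in the same min-set `M`, `Λ(c) = Λ(c')`. -/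
theorem stmt13 (R : ℤ) (hR : 2 ≤ R) (B L : Finset ℤ) (h0L : (0 : ℤ) ∈ L) (α : ℤ → ℂ)
    (hα0 : α 0 = 1) (M : Set ℝ) (hM : MinSet R B L α M) (c c' : ℝ)
    (hc : c ∈ M) (hc' : c' ∈ M) :
    Lam R B L α c = Lam R B L α c' :=
  stmt13_general R hR B L α M hM c c' hc hc'
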